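/- arXiv:2306.11357 — 2 statements merged into one kernel-verified Lean document; each statement's English description precedes it below -/
import Mathlib

section
/- Assume min(a,b,c,d) ≥ 0. For every x = (x₁,x₂,x₃) ∈ Sk(a,b,c,d) with gcd(x₁−x₃, x₂−x₃) > 0, there exists a finite composition g of the maps trop(s₁), trop(s₂), trop(s₃) such that g(x) ∈ 𝒞(Xᵢ²) ∩ 𝒞(Xⱼ²) for some i ≠ j, i.e. g(x) lies on a boundary ray. -/
noncomputable section

abbrev R3 : Type := ℝ × ℝ × ℝ

/-- The minimum of the tropical monomials of the Markov cubic, computed in `WithTop ℝ`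
(a term equal to `⊤ = ∞` is automatically irrelevant for the minimum). -/
def tmin (a b c d : WithTop ℝ) (x : R3) : WithTop ℝ :=
  min (min (min ((2 * x.1 : ℝ) : WithTop ℝ) ((2 * x.2.1 : ℝ) : WithTop ℝ))
        (min ((2 * x.2.2 : ℝ) : WithTop ℝ) (a + (x.1 : WithTop ℝ))))
    (min (min (b + (x.2.1 : WithTop ℝ)) (c + (x.2.2 : WithTop ℝ))) d)

/-- The function `f₀(x) = min(2x₁,2x₂,2x₃,a+x₁,b+x₂,c+x₃,d) − (x₁+x₂+x₃)`,
with `∞` terms omitted from the minimum.  (The minimum is never `⊤` since the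
real terms `2xᵢ` are always present, so `untop' 0` extracts its real value.) -/
def f0 (a b c d : WithTop ℝ) (x : R3) : ℝ :=
  WithTop.untopD 0 (tmin a b c d x) - (x.1 + x.2.1 + x.2.2)

/-- The skeleton `Sk(a,b,c,d)`. -/
def Sk (a b c d : WithTop ℝ) : Set R3 := {x | f0 a b c d x = 0}

/-- The tropicalized Vieta involution `trop(s₁)`. -/
def trop1 (a b c d : WithTop ℝ) (x : R3) : R3 :=
  (WithTop.untopD 0 (min (min ((2 * x.2.1 : ℝ) : WithTop ℝ) ((2 * x.2.2 : ℝ) : WithTop ℝ))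
      (min (min (b + (x.2.1 : WithTop ℝ)) (c + (x.2.2 : WithTop ℝ))) d)) - x.1,
    x.2.1, x.2.2)

/-- The tropicalized Vieta involution `trop(s₂)`. -/
def trop2 (a b c d : WithTop ℝ) (x : R3) : R3 :=
  (x.1,
    WithTop.untopD 0 (min (min ((2 * x.1 : ℝ) : WithTop ℝ) ((2 * x.2.2 : ℝ) : WithTop ℝ))
      (min (min (a + (x.1 : WithTop ℝ)) (c + (x.2.2 : WithTop ℝ))) d)) - x.2.1,
    x.2.2)

/-- The tropicalized Vieta involution `trop(s₃)`. -/
def trop3 (a b c d : WithTop ℝ) (x : R3) : R3 :=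
  (x.1, x.2.1,
    WithTop.untopD 0 (min (min ((2 * x.1 : ℝ) : WithTop ℝ) ((2 * x.2.1 : ℝ) : WithTop ℝ))
      (min (min (a + (x.1 : WithTop ℝ)) (b + (x.2.1 : WithTop ℝ))) d)) - x.2.2)

/-- The three tropicalized Vieta involutions, indexed by `Fin 3`. -/
def trop (a b c d : WithTop ℝ) : Fin 3 → R3 → R3 :=
  ![trop1 a b c d, trop2 a b c d, trop3 a b c d]

/-- The `i`-th coordinate of a point of `ℝ³`. -/
def coord : Fin 3 → R3 → ℝ := ![fun x => x.1, fun x => x.2.1, fun x => x.2.2]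

/-- The quadratic cell `𝒞(Xᵢ²)` of the skeleton. -/
def cellX (a b c d : WithTop ℝ) (i : Fin 3) : Set R3 :=
  {x ∈ Sk a b c d | x.1 + x.2.1 + x.2.2 = 2 * coord i x}

/-- The subquadratic cell `𝒞(AX₁)` of the skeleton. -/
def cellA (a b c d : WithTop ℝ) : Set R3 :=
  {x ∈ Sk a b c d | ((x.1 + x.2.1 + x.2.2 : ℝ) : WithTop ℝ) = a + (x.1 : WithTop ℝ)}

/-- The subquadratic cell `𝒞(BX₂)` of the skeleton. -/
def cellB (a b c d : WithTop ℝ) : Set R3 :=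
  {x ∈ Sk a b c d | ((x.1 + x.2.1 + x.2.2 : ℝ) : WithTop ℝ) = b + (x.2.1 : WithTop ℝ)}

/-- The subquadratic cell `𝒞(CX₃)` of the skeleton. -/
def cellC (a b c d : WithTop ℝ) : Set R3 :=
  {x ∈ Sk a b c d | ((x.1 + x.2.1 + x.2.2 : ℝ) : WithTop ℝ) = c + (x.2.2 : WithTop ℝ)}

/-- The subquadratic cell `𝒞(D)` of the skeleton. -/
def cellD (a b c d : WithTop ℝ) : Set R3 :=
  {x ∈ Sk a b c d | ((x.1 + x.2.1 + x.2.2 : ℝ) : WithTop ℝ) = d}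

/-- Apply the word `l` of tropicalized Vieta involutions to the point `x`. -/
def applyWord (a b c d : WithTop ℝ) (l : List (Fin 3)) (x : R3) : R3 :=
  l.foldl (fun y i => trop a b c d i y) x

open scoped Classical

/-- The real `gcd` function: `rgcd a b = g` if `a = p·g`, `b = q·g` for some `g > 0` and
coprime integers `p, q` (this `g` is unique when it exists), and `rgcd a b = 0` otherwise
(in particular when `a, b` are linearly independent over `ℚ`, or when `a = b = 0`). -/
def rgcd (u v : ℝ) : ℝ :=
  if h : ∃ g : ℝ, 0 < g ∧ ∃ p q : ℤ, IsCoprime p q ∧ u = p * g ∧ v = q * g then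
    h.choose
  else 0

namespace Stmt12Aux

lemma coe_le_add {p : WithTop ℝ} (hp : 0 ≤ p) {r u : ℝ} (h : r ≤ u) :
    ((r : WithTop ℝ)) ≤ p + (u : WithTop ℝ) := by
  calc ((r : WithTop ℝ)) ≤ (u : WithTop ℝ) := WithTop.coe_le_coe.2 h
    _ = 0 + (u : WithTop ℝ) := (zero_add _).symm
    _ ≤ p + (u : WithTop ℝ) := add_le_add_left hp _

lemma coe_le_of_nonpos {p : WithTop ℝ} (hp : 0 ≤ p) {r : ℝ} (h : r ≤ 0) :
    ((r : WithTop ℝ)) ≤ p := le_trans (by exact_mod_cast h) hp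

lemma min5_eq {p q d : WithTop ℝ} (hp : 0 ≤ p) (hq : 0 ≤ q) (hd : 0 ≤ d)
    {u v : ℝ} (hu : u ≤ 0) (hv : v ≤ 0) :
    min (min ((2 * u : ℝ) : WithTop ℝ) ((2 * v : ℝ) : WithTop ℝ))
      (min (min (p + (u : WithTop ℝ)) (q + (v : WithTop ℝ))) d)
    = ((2 * min u v : ℝ) : WithTop ℝ) := by
  have hmu := min_le_left u v
  have hmv := min_le_right u v
  apply le_antisymm
  · rcases le_total u v with h | h
    · calc _ ≤ min ((2 * u : ℝ) : WithTop ℝ) ((2 * v : ℝ) : WithTop ℝ) := min_le_left _ _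
        _ ≤ ((2 * u : ℝ) : WithTop ℝ) := min_le_left _ _
        _ = _ := by rw [min_eq_left h]
    · calc _ ≤ min ((2 * u : ℝ) : WithTop ℝ) ((2 * v : ℝ) : WithTop ℝ) := min_le_left _ _
        _ ≤ ((2 * v : ℝ) : WithTop ℝ) := min_le_right _ _
        _ = _ := by rw [min_eq_right h]
  · refine le_min (le_min ?_ ?_) (le_min (le_min ?_ ?_) ?_)
    · exact WithTop.coe_le_coe.2 (by linarith)
    · exact WithTop.coe_le_coe.2 (by linarith)
    · exact coe_le_add hp (by linarith)
    · exact coe_le_add hq (by linarith)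
    · exact coe_le_of_nonpos hd (by linarith)

lemma min7_eq {a b c d : WithTop ℝ} (ha : 0 ≤ a) (hb : 0 ≤ b) (hc : 0 ≤ c) (hd : 0 ≤ d)
    {x : R3} (h1 : x.1 ≤ 0) (h2 : x.2.1 ≤ 0) (h3 : x.2.2 ≤ 0) :
    tmin a b c d x = ((2 * min x.1 (min x.2.1 x.2.2) : ℝ) : WithTop ℝ) := by
  have e1 : min x.1 (min x.2.1 x.2.2) ≤ x.1 := min_le_left _ _
  have e2 : min x.1 (min x.2.1 x.2.2) ≤ x.2.1 :=
    le_trans (min_le_right _ _) (min_le_left _ _)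
  have e3 : min x.1 (min x.2.1 x.2.2) ≤ x.2.2 :=
    le_trans (min_le_right _ _) (min_le_right _ _)
  unfold tmin
  apply le_antisymm
  · rcases min_choice x.1 (min x.2.1 x.2.2) with h | h
    · rw [h]
      exact le_trans (min_le_left _ _) (le_trans (min_le_left _ _) (min_le_left _ _))
    · rcases min_choice x.2.1 x.2.2 with h' | h' <;> rw [h, h']
      · exact le_trans (min_le_left _ _) (le_trans (min_le_left _ _) (min_le_right _ _))
      · exact le_trans (min_le_left _ _) (le_trans (min_le_right _ _) (min_le_left _ _))
  · refine le_min (le_min (le_min ?_ ?_) (le_min ?_ ?_)) (le_min (le_min ?_ ?_) ?_)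
    · exact WithTop.coe_le_coe.2 (by linarith)
    · exact WithTop.coe_le_coe.2 (by linarith)
    · exact WithTop.coe_le_coe.2 (by linarith)
    · exact coe_le_add ha (by linarith)
    · exact coe_le_add hb (by linarith)
    · exact coe_le_add hc (by linarith)
    · exact coe_le_of_nonpos hd (by linarith)

lemma sk_iff {a b c d : WithTop ℝ} (ha : 0 ≤ a) (hb : 0 ≤ b) (hc : 0 ≤ c) (hd : 0 ≤ d)
    (x : R3) :
    x ∈ Sk a b c d ↔ x.1 + x.2.1 + x.2.2 = 2 * min x.1 (min x.2.1 x.2.2) := by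
  constructor
  · intro hx
    have hx' : f0 a b c d x = 0 := hx
    have hle1 : tmin a b c d x ≤ ((2 * x.1 : ℝ) : WithTop ℝ) :=
      le_trans (min_le_left _ _) (le_trans (min_le_left _ _) (min_le_left _ _))
    have hle2 : tmin a b c d x ≤ ((2 * x.2.1 : ℝ) : WithTop ℝ) :=
      le_trans (min_le_left _ _) (le_trans (min_le_left _ _) (min_le_right _ _))
    have hle3 : tmin a b c d x ≤ ((2 * x.2.2 : ℝ) : WithTop ℝ) :=
      le_trans (min_le_left _ _) (le_trans (min_le_right _ _) (min_le_left _ _))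
    have hne : tmin a b c d x ≠ ⊤ := (hle1.trans_lt (WithTop.coe_lt_top _)).ne
    obtain ⟨t, ht⟩ := WithTop.ne_top_iff_exists.1 hne
    have huntop : WithTop.untopD 0 (tmin a b c d x) = t := by rw [← ht, WithTop.untopD_coe]
    have hts : t = x.1 + x.2.1 + x.2.2 := by
      unfold f0 at hx'; rw [huntop] at hx'; linarith
    have l1 : t ≤ 2 * x.1 := WithTop.coe_le_coe.1 (ht.le.trans hle1)
    have l2 : t ≤ 2 * x.2.1 := WithTop.coe_le_coe.1 (ht.le.trans hle2)
    have l3 : t ≤ 2 * x.2.2 := WithTop.coe_le_coe.1 (ht.le.trans hle3)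
    have h1 : x.1 ≤ 0 := by linarith
    have h2 : x.2.1 ≤ 0 := by linarith
    have h3 : x.2.2 ≤ 0 := by linarith
    have hm := min7_eq ha hb hc hd h1 h2 h3
    rw [hm] at ht
    have : t = 2 * min x.1 (min x.2.1 x.2.2) := by exact_mod_cast ht
    linarith [hts]
  · intro hP
    have e1 : min x.1 (min x.2.1 x.2.2) ≤ x.1 := min_le_left _ _
    have e2 : min x.1 (min x.2.1 x.2.2) ≤ x.2.1 :=
      le_trans (min_le_right _ _) (min_le_left _ _)
    have e3 : min x.1 (min x.2.1 x.2.2) ≤ x.2.2 :=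
      le_trans (min_le_right _ _) (min_le_right _ _)
    have h1 : x.1 ≤ 0 := by linarith
    have h2 : x.2.1 ≤ 0 := by linarith
    have h3 : x.2.2 ≤ 0 := by linarith
    show f0 a b c d x = 0
    unfold f0
    rw [min7_eq ha hb hc hd h1 h2 h3, WithTop.untopD_coe]
    linarith

lemma trop1_eq {a b c d : WithTop ℝ} (hb : 0 ≤ b) (hc : 0 ≤ c) (hd : 0 ≤ d)
    {x : R3} (h2 : x.2.1 ≤ 0) (h3 : x.2.2 ≤ 0) :
    trop1 a b c d x = (2 * min x.2.1 x.2.2 - x.1, x.2.1, x.2.2) := by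
  unfold trop1
  rw [min5_eq hb hc hd h2 h3, WithTop.untopD_coe]

lemma trop2_eq {a b c d : WithTop ℝ} (ha : 0 ≤ a) (hc : 0 ≤ c) (hd : 0 ≤ d)
    {x : R3} (h1 : x.1 ≤ 0) (h3 : x.2.2 ≤ 0) :
    trop2 a b c d x = (x.1, 2 * min x.1 x.2.2 - x.2.1, x.2.2) := by
  unfold trop2
  rw [min5_eq ha hc hd h1 h3, WithTop.untopD_coe]

lemma trop3_eq {a b c d : WithTop ℝ} (ha : 0 ≤ a) (hb : 0 ≤ b) (hd : 0 ≤ d)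
    {x : R3} (h1 : x.1 ≤ 0) (h2 : x.2.1 ≤ 0) :
    trop3 a b c d x = (x.1, x.2.1, 2 * min x.1 x.2.1 - x.2.2) := by
  unfold trop3
  rw [min5_eq ha hb hd h1 h2, WithTop.untopD_coe]


lemma descent {a b c d : WithTop ℝ} (ha : 0 ≤ a) (hb : 0 ≤ b) (hc : 0 ≤ c) (hd : 0 ≤ d)
    {g : ℝ} (hg : 0 < g) :
    ∀ n : ℕ, ∀ x : R3,
      (∃ k : ℤ, x.1 = (k : ℝ) * g) → (∃ k : ℤ, x.2.1 = (k : ℝ) * g) →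
      (∃ k : ℤ, x.2.2 = (k : ℝ) * g) →
      x.1 + x.2.1 + x.2.2 = 2 * min x.1 (min x.2.1 x.2.2) →
      -(x.1 + x.2.1 + x.2.2) ≤ n * (2 * g) →
      ∃ (l : List (Fin 3)) (i j : Fin 3), i ≠ j ∧
        applyWord a b c d l x ∈ cellX a b c d i ∩ cellX a b c d j := by
  intro n
  induction n with
  | zero =>
    intro x _ _ _ hP hbd
    have e1 : min x.1 (min x.2.1 x.2.2) ≤ x.1 := min_le_left _ _
    have e2 : min x.1 (min x.2.1 x.2.2) ≤ x.2.1 :=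
      le_trans (min_le_right _ _) (min_le_left _ _)
    have e3 : min x.1 (min x.2.1 x.2.2) ≤ x.2.2 :=
      le_trans (min_le_right _ _) (min_le_right _ _)
    norm_num at hbd
    have h1 : x.1 = 0 := by linarith
    have h2 : x.2.1 = 0 := by linarith
    have hSk : x ∈ Sk a b c d := (sk_iff ha hb hc hd x).2 hP
    refine ⟨[], 0, 1, by decide, ⟨hSk, ?_⟩, ⟨hSk, ?_⟩⟩
    · show x.1 + x.2.1 + x.2.2 = 2 * x.1
      linarith
    · show x.1 + x.2.1 + x.2.2 = 2 * x.2.1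
      linarith
  | succ n ih =>
    intro x hk1' hk2' hk3' hP hbd
    obtain ⟨k1, hk1⟩ := hk1'
    obtain ⟨k2, hk2⟩ := hk2'
    obtain ⟨k3, hk3⟩ := hk3'
    have e1 : min x.1 (min x.2.1 x.2.2) ≤ x.1 := min_le_left _ _
    have e2 : min x.1 (min x.2.1 x.2.2) ≤ x.2.1 :=
      le_trans (min_le_right _ _) (min_le_left _ _)
    have e3 : min x.1 (min x.2.1 x.2.2) ≤ x.2.2 :=
      le_trans (min_le_right _ _) (min_le_right _ _)
    have h1 : x.1 ≤ 0 := by linarith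
    have h2 : x.2.1 ≤ 0 := by linarith
    have h3 : x.2.2 ≤ 0 := by linarith
    have hSk : x ∈ Sk a b c d := (sk_iff ha hb hc hd x).2 hP
    push_cast at hbd
    have fin : ∀ i j : Fin 3, i ≠ j → x.1 + x.2.1 + x.2.2 = 2 * coord i x →
        x.1 + x.2.1 + x.2.2 = 2 * coord j x →
        ∃ (l : List (Fin 3)) (i j : Fin 3), i ≠ j ∧
          applyWord a b c d l x ∈ cellX a b c d i ∩ cellX a b c d j := by
      intro i j hij hi hj
      exact ⟨[], i, j, hij, ⟨hSk, hi⟩, ⟨hSk, hj⟩⟩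
    have gap : ∀ k k' : ℤ, (k : ℝ) * g < (k' : ℝ) * g → (k : ℝ) * g + g ≤ (k' : ℝ) * g := by
      intro k k' hlt
      have hkk : k < k' := by
        by_contra hcon
        push_neg at hcon
        have : (k' : ℝ) * g ≤ (k : ℝ) * g :=
          mul_le_mul_of_nonneg_right (by exact_mod_cast hcon) hg.le
        linarith
      have : (k : ℝ) + 1 ≤ (k' : ℝ) := by exact_mod_cast hkk
      nlinarith
    rcases le_total x.1 x.2.1 with c12 | c12
    · rcases le_total x.1 x.2.2 with c13 | c13
      · -- x.1 is the min
        have hm : min x.1 (min x.2.1 x.2.2) = x.1 := min_eq_left (le_min c12 c13)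
        have hs : x.1 + x.2.1 + x.2.2 = 2 * x.1 := by rw [hP, hm]
        rcases le_or_gt x.2.1 x.1 with e | e
        · exact fin 0 1 (by decide) hs (by show _ = 2 * x.2.1; linarith)
        rcases le_or_gt x.2.2 x.1 with e' | e'
        · exact fin 0 2 (by decide) hs (by show _ = 2 * x.2.2; linarith)
        -- descend via trop1
        have hmu := min_le_left x.2.1 x.2.2
        have hmv := min_le_right x.2.1 x.2.2
        have hm'lt : x.1 < min x.2.1 x.2.2 := lt_min e e'
        have hy : trop a b c d 0 x = (2 * min x.2.1 x.2.2 - x.1, x.2.1, x.2.2) := by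
          show trop1 a b c d x = _
          exact trop1_eq hb hc hd h2 h3
        have hkmE : ∃ k : ℤ, min x.2.1 x.2.2 = (k : ℝ) * g := by
          rcases min_choice x.2.1 x.2.2 with h | h
          · exact ⟨k2, by rw [h, hk2]⟩
          · exact ⟨k3, by rw [h, hk3]⟩
        obtain ⟨km, hkm⟩ := hkmE
        have hgap : g ≤ min x.2.1 x.2.2 - x.1 := by
          have := gap k1 km (by rw [← hk1, ← hkm]; exact hm'lt)
          rw [← hk1, ← hkm] at this; linarith
        have w1 : (2 * min x.2.1 x.2.2 - x.1 : ℝ) = ((2 * km - k1 : ℤ) : ℝ) * g := by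
          push_cast
          rw [hkm, hk1]; ring
        have wP : 2 * min x.2.1 x.2.2 - x.1 + x.2.1 + x.2.2
            = 2 * min (2 * min x.2.1 x.2.2 - x.1) (min x.2.1 x.2.2) := by
          rw [min_eq_right (by linarith : min x.2.1 x.2.2 ≤ 2 * min x.2.1 x.2.2 - x.1)]
          linarith
        have wB : -(2 * min x.2.1 x.2.2 - x.1 + x.2.1 + x.2.2) ≤ (n : ℝ) * (2 * g) := by
          linarith
        obtain ⟨l, i, j, hij, hmem⟩ := ih (2 * min x.2.1 x.2.2 - x.1, x.2.1, x.2.2)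
          ⟨2 * km - k1, w1⟩ ⟨k2, hk2⟩ ⟨k3, hk3⟩ wP wB
        refine ⟨0 :: l, i, j, hij, ?_⟩
        rw [show applyWord a b c d (0 :: l) x
              = applyWord a b c d l (trop a b c d 0 x) from rfl, hy]
        exact hmem
      · -- x.2.2 ≤ x.1 ≤ x.2.1 : x.2.2 is the min
        have hm : min x.1 (min x.2.1 x.2.2) = x.2.2 := by
          rw [min_eq_right (c13.trans c12), min_eq_right c13]
        have hs : x.1 + x.2.1 + x.2.2 = 2 * x.2.2 := by rw [hP, hm]
        rcases le_or_gt x.1 x.2.2 with e | e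
        · exact fin 0 2 (by decide) (by show _ = 2 * x.1; linarith) hs
        -- x.2.2 < x.1 ≤ x.2.1 : descend via trop3
        have e' : x.2.2 < x.2.1 := lt_of_lt_of_le e c12
        have hmu := min_le_left x.1 x.2.1
        have hmv := min_le_right x.1 x.2.1
        have hm'lt : x.2.2 < min x.1 x.2.1 := lt_min e e'
        have hy : trop a b c d 2 x = (x.1, x.2.1, 2 * min x.1 x.2.1 - x.2.2) := by
          show trop3 a b c d x = _
          exact trop3_eq ha hb hd h1 h2
        have hkmE : ∃ k : ℤ, min x.1 x.2.1 = (k : ℝ) * g := by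
          rcases min_choice x.1 x.2.1 with h | h
          · exact ⟨k1, by rw [h, hk1]⟩
          · exact ⟨k2, by rw [h, hk2]⟩
        obtain ⟨km, hkm⟩ := hkmE
        have hgap : g ≤ min x.1 x.2.1 - x.2.2 := by
          have := gap k3 km (by rw [← hk3, ← hkm]; exact hm'lt)
          rw [← hk3, ← hkm] at this; linarith
        have w3 : (2 * min x.1 x.2.1 - x.2.2 : ℝ) = ((2 * km - k3 : ℤ) : ℝ) * g := by
          push_cast
          rw [hkm, hk3]; ring
        have hminy : min x.1 (min x.2.1 (2 * min x.1 x.2.1 - x.2.2)) = min x.1 x.2.1 := by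
          apply le_antisymm
          · exact le_min (min_le_left _ _)
              (le_trans (min_le_right _ _) (min_le_left _ _))
          · exact le_min (min_le_left _ _)
              (le_min (min_le_right _ _) (by linarith))
        have wP : x.1 + x.2.1 + (2 * min x.1 x.2.1 - x.2.2)
            = 2 * min x.1 (min x.2.1 (2 * min x.1 x.2.1 - x.2.2)) := by
          rw [hminy]; linarith
        have wB : -(x.1 + x.2.1 + (2 * min x.1 x.2.1 - x.2.2)) ≤ (n : ℝ) * (2 * g) := by
          linarith
        obtain ⟨l, i, j, hij, hmem⟩ := ih (x.1, x.2.1, 2 * min x.1 x.2.1 - x.2.2)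
          ⟨k1, hk1⟩ ⟨k2, hk2⟩ ⟨2 * km - k3, w3⟩ wP wB
        refine ⟨2 :: l, i, j, hij, ?_⟩
        rw [show applyWord a b c d (2 :: l) x
              = applyWord a b c d l (trop a b c d 2 x) from rfl, hy]
        exact hmem
    · rcases le_total x.2.1 x.2.2 with c23 | c23
      · -- x.2.1 is the min
        have hm : min x.1 (min x.2.1 x.2.2) = x.2.1 := by
          rw [min_eq_left c23, min_eq_right c12]
        have hs : x.1 + x.2.1 + x.2.2 = 2 * x.2.1 := by rw [hP, hm]
        rcases le_or_gt x.1 x.2.1 with e | e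
        · exact fin 0 1 (by decide) (by show _ = 2 * x.1; linarith) hs
        rcases le_or_gt x.2.2 x.2.1 with e' | e'
        · exact fin 1 2 (by decide) hs (by show _ = 2 * x.2.2; linarith)
        -- descend via trop2
        have hmu := min_le_left x.1 x.2.2
        have hmv := min_le_right x.1 x.2.2
        have hm'lt : x.2.1 < min x.1 x.2.2 := lt_min e e'
        have hy : trop a b c d 1 x = (x.1, 2 * min x.1 x.2.2 - x.2.1, x.2.2) := by
          show trop2 a b c d x = _
          exact trop2_eq ha hc hd h1 h3
        have hkmE : ∃ k : ℤ, min x.1 x.2.2 = (k : ℝ) * g := by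
          rcases min_choice x.1 x.2.2 with h | h
          · exact ⟨k1, by rw [h, hk1]⟩
          · exact ⟨k3, by rw [h, hk3]⟩
        obtain ⟨km, hkm⟩ := hkmE
        have hgap : g ≤ min x.1 x.2.2 - x.2.1 := by
          have := gap k2 km (by rw [← hk2, ← hkm]; exact hm'lt)
          rw [← hk2, ← hkm] at this; linarith
        have w2 : (2 * min x.1 x.2.2 - x.2.1 : ℝ) = ((2 * km - k2 : ℤ) : ℝ) * g := by
          push_cast
          rw [hkm, hk2]; ring
        have hminy : min x.1 (min (2 * min x.1 x.2.2 - x.2.1) x.2.2) = min x.1 x.2.2 := by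
          apply le_antisymm
          · exact le_min (min_le_left _ _)
              (le_trans (min_le_right _ _) (min_le_right _ _))
          · exact le_min (min_le_left _ _)
              (le_min (by linarith) (min_le_right _ _))
        have wP : x.1 + (2 * min x.1 x.2.2 - x.2.1) + x.2.2
            = 2 * min x.1 (min (2 * min x.1 x.2.2 - x.2.1) x.2.2) := by
          rw [hminy]; linarith
        have wB : -(x.1 + (2 * min x.1 x.2.2 - x.2.1) + x.2.2) ≤ (n : ℝ) * (2 * g) := by
          linarith
        obtain ⟨l, i, j, hij, hmem⟩ := ih (x.1, 2 * min x.1 x.2.2 - x.2.1, x.2.2)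
          ⟨k1, hk1⟩ ⟨2 * km - k2, w2⟩ ⟨k3, hk3⟩ wP wB
        refine ⟨1 :: l, i, j, hij, ?_⟩
        rw [show applyWord a b c d (1 :: l) x
              = applyWord a b c d l (trop a b c d 1 x) from rfl, hy]
        exact hmem
      · -- x.2.2 ≤ x.2.1 ≤ x.1 : x.2.2 is the min
        have hm : min x.1 (min x.2.1 x.2.2) = x.2.2 := by
          rw [min_eq_right c23, min_eq_right (c23.trans c12)]
        have hs : x.1 + x.2.1 + x.2.2 = 2 * x.2.2 := by rw [hP, hm]
        rcases le_or_gt x.2.1 x.2.2 with e | e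
        · exact fin 1 2 (by decide) (by show _ = 2 * x.2.1; linarith) hs
        -- x.2.2 < x.2.1 ≤ x.1 : descend via trop3
        have e' : x.2.2 < x.1 := lt_of_lt_of_le e c12
        have hmu := min_le_left x.1 x.2.1
        have hmv := min_le_right x.1 x.2.1
        have hm'lt : x.2.2 < min x.1 x.2.1 := lt_min e' e
        have hy : trop a b c d 2 x = (x.1, x.2.1, 2 * min x.1 x.2.1 - x.2.2) := by
          show trop3 a b c d x = _
          exact trop3_eq ha hb hd h1 h2
        have hkmE : ∃ k : ℤ, min x.1 x.2.1 = (k : ℝ) * g := by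
          rcases min_choice x.1 x.2.1 with h | h
          · exact ⟨k1, by rw [h, hk1]⟩
          · exact ⟨k2, by rw [h, hk2]⟩
        obtain ⟨km, hkm⟩ := hkmE
        have hgap : g ≤ min x.1 x.2.1 - x.2.2 := by
          have := gap k3 km (by rw [← hk3, ← hkm]; exact hm'lt)
          rw [← hk3, ← hkm] at this; linarith
        have w3 : (2 * min x.1 x.2.1 - x.2.2 : ℝ) = ((2 * km - k3 : ℤ) : ℝ) * g := by
          push_cast
          rw [hkm, hk3]; ring
        have hminy : min x.1 (min x.2.1 (2 * min x.1 x.2.1 - x.2.2)) = min x.1 x.2.1 := by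
          apply le_antisymm
          · exact le_min (min_le_left _ _)
              (le_trans (min_le_right _ _) (min_le_left _ _))
          · exact le_min (min_le_left _ _)
              (le_min (min_le_right _ _) (by linarith))
        have wP : x.1 + x.2.1 + (2 * min x.1 x.2.1 - x.2.2)
            = 2 * min x.1 (min x.2.1 (2 * min x.1 x.2.1 - x.2.2)) := by
          rw [hminy]; linarith
        have wB : -(x.1 + x.2.1 + (2 * min x.1 x.2.1 - x.2.2)) ≤ (n : ℝ) * (2 * g) := by
          linarith
        obtain ⟨l, i, j, hij, hmem⟩ := ih (x.1, x.2.1, 2 * min x.1 x.2.1 - x.2.2)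
          ⟨k1, hk1⟩ ⟨k2, hk2⟩ ⟨2 * km - k3, w3⟩ wP wB
        refine ⟨2 :: l, i, j, hij, ?_⟩
        rw [show applyWord a b c d (2 :: l) x
              = applyWord a b c d l (trop a b c d 2 x) from rfl, hy]
        exact hmem

end Stmt12Aux

open Stmt12Aux

theorem statement12 (a b c d : WithTop ℝ)
    (hhol : (0 : WithTop ℝ) ≤ min (min a b) (min c d))
    (x : R3) (hx : x ∈ Sk a b c d)
    (hg : 0 < rgcd (x.1 - x.2.2) (x.2.1 - x.2.2)) :
    ∃ (l : List (Fin 3)) (i j : Fin 3), i ≠ j ∧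
      applyWord a b c d l x ∈ cellX a b c d i ∩ cellX a b c d j := by
  have ha : 0 ≤ a := le_trans hhol ((min_le_left _ _).trans (min_le_left _ _))
  have hb : 0 ≤ b := le_trans hhol ((min_le_left _ _).trans (min_le_right _ _))
  have hc : 0 ≤ c := le_trans hhol ((min_le_right _ _).trans (min_le_left _ _))
  have hd : 0 ≤ d := le_trans hhol ((min_le_right _ _).trans (min_le_right _ _))
  by_cases hE : ∃ g : ℝ, 0 < g ∧ ∃ p q : ℤ, IsCoprime p q ∧
      x.1 - x.2.2 = p * g ∧ x.2.1 - x.2.2 = q * g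
  swap
  · rw [rgcd, dif_neg hE] at hg
    exact absurd hg (lt_irrefl 0)
  obtain ⟨g, hgpos, p, q, -, hu, hv⟩ := hE
  have hP := (sk_iff ha hb hc hd x).1 hx
  have key : ∀ k1 k2 k3 : ℤ, x.1 = (k1 : ℝ) * g → x.2.1 = (k2 : ℝ) * g →
      x.2.2 = (k3 : ℝ) * g →
      ∃ (l : List (Fin 3)) (i j : Fin 3), i ≠ j ∧
        applyWord a b c d l x ∈ cellX a b c d i ∩ cellX a b c d j := by
    intro k1 k2 k3 e1 e2 e3
    refine descent ha hb hc hd hgpos ⌈(-(x.1 + x.2.1 + x.2.2)) / (2 * g)⌉₊ x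
      ⟨k1, e1⟩ ⟨k2, e2⟩ ⟨k3, e3⟩ hP ?_
    have h2g : (0 : ℝ) < 2 * g := by linarith
    exact (div_le_iff₀ h2g).1 (Nat.le_ceil _)
  have hcase : x.1 = x.2.1 + x.2.2 ∨ x.2.1 = x.1 + x.2.2 ∨ x.2.2 = x.1 + x.2.1 := by
    rcases min_choice x.1 (min x.2.1 x.2.2) with h | h
    · left; rw [h] at hP; linarith
    · rcases min_choice x.2.1 x.2.2 with h' | h'
      · right; left; rw [h, h'] at hP; linarith
      · right; right; rw [h, h'] at hP; linarith
  rcases hcase with h | h | h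
  · exact key (2 * p - q) p (p - q)
      (by push_cast; linear_combination 2 * hu - hv - h)
      (by linarith)
      (by push_cast; linear_combination hu - hv - h)
  · exact key q (2 * q - p) (q - p)
      (by linarith)
      (by push_cast; linear_combination 2 * hv - hu - h)
      (by push_cast; linear_combination hv - hu - h)
  · exact key (-q) (-p) (-p - q)
      (by push_cast; linear_combination -hv - h)
      (by push_cast; linear_combination -hu - h)
      (by push_cast; linear_combination -hu - hv - h)
end
end

section
/- Assume min(a,b,c,d) ≥ 0. Then: (1) there is a homeomorphism h : Sk(a,b,c,d) → Sk(∞,∞,∞,∞) with h ∘ trop(sᵢ) = trop(sᵢ)^∞ ∘ h for i = 1, 2, 3; (2) letting S be the quotient of Sk(∞,∞,∞,∞) ∖ {(0,0,0)} by the scaling action of ℝ_{>0} (the maps trop(sᵢ)^∞ commute with scaling and hence induce maps on S), there is a homeomorphism G : S → ℙ¹(ℝ) such that G sends the induced map of trop(sᵢ)^∞ to the projective action of Mᵢ, i.e. G([trop(sᵢ)^∞](s)) = Mᵢ · G(s) for all s ∈ S and i = 1, 2, 3. -/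
noncomputable section

/-- The degenerate skeleton `Sk(∞,∞,∞,∞) = {x : min(2x₁,2x₂,2x₃) = x₁+x₂+x₃}`. -/
def SkInf : Set R3 :=
  {x : R3 | min (min (2 * x.1) (2 * x.2.1)) (2 * x.2.2) = x.1 + x.2.1 + x.2.2}

/-- The tropicalized Vieta involutions `trop(sᵢ)^∞` for parameters `a=b=c=d=∞`. -/
def tropInf : Fin 3 → R3 → R3 :=
  ![fun x => (min (2 * x.2.1) (2 * x.2.2) - x.1, x.2.1, x.2.2),
    fun x => (x.1, min (2 * x.1) (2 * x.2.2) - x.2.1, x.2.2),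
    fun x => (x.1, x.2.1, min (2 * x.1) (2 * x.2.1) - x.2.2)]

/-- The punctured degenerate skeleton `Sk(∞,∞,∞,∞) ∖ {0}`. -/
def SkInfStar : Set R3 := {x : R3 | x ∈ SkInf ∧ x ≠ 0}

/-- The matrices `M₁ = [[−1,2],[0,1]]`, `M₂ = [[1,0],[2,−1]]`, `M₃ = [[−1,0],[0,1]]`. -/
def refM : Fin 3 → Matrix (Fin 2) (Fin 2) ℝ :=
  ![!![-1, 2; 0, 1], !![1, 0; 2, -1], !![-1, 0; 0, 1]]

lemma refM_sq (i : Fin 3) : refM i * refM i = 1 := by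
  fin_cases i <;>
    simp [refM, Matrix.mul_fin_two, Matrix.one_fin_two]

lemma refM_toLin'_injective (i : Fin 3) :
    Function.Injective (Matrix.toLin' (refM i)) := by
  intro x y hxy
  have h2 : ∀ v : Fin 2 → ℝ, Matrix.toLin' (refM i) (Matrix.toLin' (refM i) v) = v := by
    intro v
    rw [Matrix.toLin'_apply, Matrix.toLin'_apply, Matrix.mulVec_mulVec, refM_sq,
      Matrix.one_mulVec]
  have := congrArg (Matrix.toLin' (refM i)) hxy
  rwa [h2, h2] at this

instance : TopologicalSpace (Projectivization ℝ (Fin 2 → ℝ)) :=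
  inferInstanceAs (TopologicalSpace (Quotient (projectivizationSetoid ℝ (Fin 2 → ℝ))))

/-! ### Auxiliary material -/

section Aux

open Projectivization

/-- Membership in the degenerate skeleton, unfolded. -/
lemma mem_skinf_iff (x : R3) : x ∈ SkInf ↔
    (x.1 ≤ 0 ∧ x.2.1 ≤ 0 ∧ x.2.2 ≤ 0) ∧
      (x.2.2 = x.1 + x.2.1 ∨ x.2.2 = x.1 - x.2.1 ∨ x.2.2 = x.2.1 - x.1) := by
  simp only [SkInf, Set.mem_setOf_eq]
  constructor
  · intro h
    have h1 : min (min (2 * x.1) (2 * x.2.1)) (2 * x.2.2) ≤ 2 * x.1 :=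
      le_trans (min_le_left _ _) (min_le_left _ _)
    have h2 : min (min (2 * x.1) (2 * x.2.1)) (2 * x.2.2) ≤ 2 * x.2.1 :=
      le_trans (min_le_left _ _) (min_le_right _ _)
    have h3 : min (min (2 * x.1) (2 * x.2.1)) (2 * x.2.2) ≤ 2 * x.2.2 := min_le_right _ _
    rw [h] at h1 h2 h3
    have he : min (min (2 * x.1) (2 * x.2.1)) (2 * x.2.2) = 2 * x.1 ∨
        min (min (2 * x.1) (2 * x.2.1)) (2 * x.2.2) = 2 * x.2.1 ∨
        min (min (2 * x.1) (2 * x.2.1)) (2 * x.2.2) = 2 * x.2.2 := by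
      rcases min_cases (min (2 * x.1) (2 * x.2.1)) (2 * x.2.2) with ⟨h4, -⟩ | ⟨h4, -⟩
      · rcases min_cases (2 * x.1) (2 * x.2.1) with ⟨h5, -⟩ | ⟨h5, -⟩
        · exact Or.inl (h4.trans h5)
        · exact Or.inr (Or.inl (h4.trans h5))
      · exact Or.inr (Or.inr h4)
    rw [h] at he
    rcases he with he | he | he <;>
      refine ⟨⟨by linarith, by linarith, by linarith⟩, ?_⟩ <;>
      first
        | (left; linarith)
        | (right; left; linarith)
        | (right; right; linarith)
  · rintro ⟨⟨s1, s2, s3⟩, h | h | h⟩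
    · rw [min_eq_right (le_min (by linarith) (by linarith))]; linarith
    · rw [min_eq_left (by linarith : 2 * x.1 ≤ 2 * x.2.1),
        min_eq_left (by linarith : 2 * x.1 ≤ 2 * x.2.2)]; linarith
    · rw [min_eq_right (by linarith : 2 * x.2.1 ≤ 2 * x.1),
        min_eq_left (by linarith : 2 * x.2.1 ≤ 2 * x.2.2)]; linarith

lemma skinf_nonpos {x : R3} (hx : x ∈ SkInf) : x.1 ≤ 0 ∧ x.2.1 ≤ 0 ∧ x.2.2 ≤ 0 :=
  ((mem_skinf_iff x).1 hx).1

/-- A continuous choice of projective coordinates on the skeleton. -/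
def gvec (x : R3) : Fin 2 → ℝ :=
  ![x.1, if x.2.2 = x.1 + x.2.1 then -x.2.1 else x.2.1]

lemma pair_ne {x : R3} (hx : x ∈ SkInfStar) : ¬(x.1 = 0 ∧ x.2.1 = 0) := by
  rintro ⟨h1, h2⟩
  obtain ⟨-, hd⟩ := (mem_skinf_iff x).1 hx.1
  apply hx.2
  have h3 : x.2.2 = 0 := by rcases hd with h | h | h <;> rw [h, h1, h2] <;> ring
  exact Prod.ext h1 (Prod.ext h2 h3)

lemma gvec_ne_zero {x : R3} (hx : x ∈ SkInfStar) : gvec x ≠ 0 := by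
  intro h
  apply pair_ne hx
  have h0 := congrFun h 0
  have h1 := congrFun h 1
  simp only [gvec, Matrix.cons_val_zero, Matrix.cons_val_one, Matrix.head_cons,
    Pi.zero_apply] at h0 h1
  refine ⟨h0, ?_⟩
  split_ifs at h1 with h' <;> linarith

/-- A canonical representative of a projective point, inside the punctured skeleton. -/
def sbar (w : Fin 2 → ℝ) : R3 := (-|w 0|, -|w 1|, -|w 0 - w 1|)

lemma sbar_mem {w : Fin 2 → ℝ} (hw : w ≠ 0) : sbar w ∈ SkInfStar := by
  constructor
  · rw [mem_skinf_iff]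
    refine ⟨⟨neg_nonpos.2 (abs_nonneg _), neg_nonpos.2 (abs_nonneg _),
      neg_nonpos.2 (abs_nonneg _)⟩, ?_⟩
    show -|w 0 - w 1| = -|w 0| + -|w 1| ∨ -|w 0 - w 1| = -|w 0| - -|w 1| ∨
      -|w 0 - w 1| = -|w 1| - -|w 0|
    rcases abs_cases (w 0) with ⟨a0, b0⟩ | ⟨a0, b0⟩ <;>
      rcases abs_cases (w 1) with ⟨a1, b1⟩ | ⟨a1, b1⟩ <;>
      rcases abs_cases (w 0 - w 1) with ⟨a2, b2⟩ | ⟨a2, b2⟩ <;>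
      first
        | (left; linarith)
        | (right; left; linarith)
        | (right; right; linarith)
  · intro h
    apply hw
    have h0 : -|w 0| = 0 := congrArg Prod.fst h
    have h1 : -|w 1| = 0 := congrArg (Prod.fst ∘ Prod.snd) h
    funext i
    fin_cases i
    · simpa [abs_eq_zero] using (neg_eq_zero.1 h0)
    · simpa [abs_eq_zero] using (neg_eq_zero.1 h1)

lemma rep_eq {x : R3} (hx : x ∈ SkInfStar) : sbar (gvec x) = x := by
  obtain ⟨⟨s1, s2, s3⟩, hd⟩ := (mem_skinf_iff x).1 hx.1
  unfold sbar gvec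
  simp only [Matrix.cons_val_zero, Matrix.cons_val_one, Matrix.head_cons]
  split_ifs with h
  · refine Prod.ext ?_ (Prod.ext ?_ ?_)
    · show -|x.1| = x.1; rw [abs_of_nonpos s1]; ring
    · show -|-x.2.1| = x.2.1; rw [abs_neg, abs_of_nonpos s2]; ring
    · show -|x.1 - -x.2.1| = x.2.2
      have h2 : x.1 - -x.2.1 = x.2.2 := by linarith
      rw [h2, abs_of_nonpos s3]; ring
  · have h2 : |x.1 - x.2.1| = -x.2.2 := by
      rcases hd with h' | h' | h'
      · exact absurd h' h
      · rw [abs_of_nonpos (by linarith)]; linarith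
      · rw [abs_of_nonneg (by linarith)]; linarith
    refine Prod.ext ?_ (Prod.ext ?_ ?_)
    · show -|x.1| = x.1; rw [abs_of_nonpos s1]; ring
    · show -|x.2.1| = x.2.1; rw [abs_of_nonpos s2]; ring
    · show -|x.1 - x.2.1| = x.2.2; rw [h2]; ring

lemma sbar_smul (t : ℝ) (w : Fin 2 → ℝ) : sbar (t • w) = |t| • sbar w := by
  unfold sbar
  refine Prod.ext ?_ (Prod.ext ?_ ?_) <;>
    simp only [Pi.smul_apply, smul_eq_mul, Prod.smul_fst, Prod.smul_snd, abs_mul]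
  · ring
  · ring
  · rw [show t * w 0 - t * w 1 = t * (w 0 - w 1) by ring, abs_mul]; ring

lemma smul_mem_star {t : ℝ} (ht : 0 < t) {x : R3} (hx : x ∈ SkInfStar) :
    t • x ∈ SkInfStar := by
  obtain ⟨⟨s1, s2, s3⟩, hd⟩ := (mem_skinf_iff x).1 hx.1
  constructor
  · rw [mem_skinf_iff]
    simp only [Prod.smul_fst, Prod.smul_snd, smul_eq_mul]
    refine ⟨⟨by nlinarith, by nlinarith, by nlinarith⟩, ?_⟩
    rcases hd with h | h | h
    · left; rw [h]; ring
    · right; left; rw [h]; ring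
    · right; right; rw [h]; ring
  · intro h0
    rcases smul_eq_zero.1 h0 with h | h
    · exact absurd h (ne_of_gt ht)
    · exact hx.2 h

lemma mk_scalar {v w : Fin 2 → ℝ} (hv : v ≠ 0) (hw : w ≠ 0) (c : ℝ) (h : c • w = v) :
    Projectivization.mk ℝ v hv = Projectivization.mk ℝ w hw :=
  (Projectivization.mk_eq_mk_iff' ℝ v w hv hw).2 ⟨c, h⟩

/-- The concrete quotient map to the projective line. -/
def Gmap : SkInfStar → Projectivization ℝ (Fin 2 → ℝ) :=
  fun x => Projectivization.mk ℝ (gvec x.1) (gvec_ne_zero x.2)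

lemma Gmap_eq {y : R3} (hy : y ∈ SkInfStar) {w : Fin 2 → ℝ} (hw : w ≠ 0)
    (hcase : (y.2.2 = y.1 + y.2.1 ∧ ∃ c : ℝ, c • w = ![y.1, -y.2.1]) ∨
      (¬(y.2.2 = y.1 + y.2.1) ∧ ∃ c : ℝ, c • w = ![y.1, y.2.1])) :
    Gmap ⟨y, hy⟩ = Projectivization.mk ℝ w hw := by
  apply (Projectivization.mk_eq_mk_iff' ℝ _ _ _ _).2
  rcases hcase with ⟨h, c, e⟩ | ⟨h, c, e⟩
  · exact ⟨c, by unfold gvec; rw [if_pos h]; exact e⟩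
  · exact ⟨c, by unfold gvec; rw [if_neg h]; exact e⟩

lemma Gmap_eq' {y : R3} (hy : y ∈ SkInfStar) {w : Fin 2 → ℝ} (hw : w ≠ 0)
    (p q r : ℝ) (hy' : y = (p, q, r))
    (hcase : (r = p + q ∧ ∃ c : ℝ, c • w = ![p, -q]) ∨
      (¬(r = p + q) ∧ ∃ c : ℝ, c • w = ![p, q])) :
    Gmap ⟨y, hy⟩ = Projectivization.mk ℝ w hw := by
  subst hy'
  exact Gmap_eq hy hw hcase

lemma tropInf_zero (x : R3) :
    tropInf 0 x = (min (2 * x.2.1) (2 * x.2.2) - x.1, x.2.1, x.2.2) := rfl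

lemma tropInf_one (x : R3) :
    tropInf 1 x = (x.1, min (2 * x.1) (2 * x.2.2) - x.2.1, x.2.2) := rfl

lemma tropInf_two (x : R3) :
    tropInf 2 x = (x.1, x.2.1, min (2 * x.1) (2 * x.2.1) - x.2.2) := rfl

lemma trop_zero (a b c d : WithTop ℝ) : trop a b c d 0 = trop1 a b c d := rfl
lemma trop_one (a b c d : WithTop ℝ) : trop a b c d 1 = trop2 a b c d := rfl
lemma trop_two (a b c d : WithTop ℝ) : trop a b c d 2 = trop3 a b c d := rfl

lemma toLin_pair (M : Matrix (Fin 2) (Fin 2) ℝ) (u v : ℝ) :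
    Matrix.toLin' M ![u, v] = ![M 0 0 * u + M 0 1 * v, M 1 0 * u + M 1 1 * v] := by
  rw [Matrix.toLin'_apply]
  funext j
  fin_cases j <;>
    simp [Matrix.mulVec, dotProduct, Fin.sum_univ_two]

lemma toLin_gvec_ne (i : Fin 3) {x : R3} (hx : x ∈ SkInfStar) :
    Matrix.toLin' (refM i) (gvec x) ≠ 0 := fun h =>
  gvec_ne_zero hx (refM_toLin'_injective i (by rw [h, map_zero]))

lemma refM0_pair (u v : ℝ) : Matrix.toLin' (refM 0) ![u, v] = ![-u + 2 * v, v] := by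
  rw [toLin_pair]
  funext j
  fin_cases j <;> norm_num [refM]

lemma refM1_pair (u v : ℝ) : Matrix.toLin' (refM 1) ![u, v] = ![u, 2 * u - v] := by
  rw [toLin_pair]
  funext j
  fin_cases j <;> norm_num [refM] <;> ring

lemma refM2_pair (u v : ℝ) : Matrix.toLin' (refM 2) ![u, v] = ![-u, v] := by
  rw [toLin_pair]
  funext j
  fin_cases j <;> norm_num [refM, Matrix.cons_val_two]

lemma Gequiv0 {x : R3} (hxs : x ∈ SkInfStar) (hx' : tropInf 0 x ∈ SkInfStar) :
    Gmap ⟨tropInf 0 x, hx'⟩ =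
      Projectivization.mk ℝ (Matrix.toLin' (refM 0) (gvec x)) (toLin_gvec_ne 0 hxs) := by
  obtain ⟨⟨s1, s2, s3⟩, hd⟩ := (mem_skinf_iff x).1 hxs.1
  by_cases hA : x.2.2 = x.1 + x.2.1
  · have hgx : gvec x = ![x.1, -x.2.1] := by unfold gvec; rw [if_pos hA]
    have hg : Matrix.toLin' (refM 0) (gvec x) = ![-x.1 - 2 * x.2.1, -x.2.1] := by
      rw [hgx, refM0_pair]; funext j; fin_cases j <;> simp <;> ring
    have hmin : min (2 * x.2.1) (2 * x.2.2) = 2 * x.2.2 := min_eq_right (by linarith)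
    refine Gmap_eq' hx' _ (2 * x.2.2 - x.1) x.2.1 x.2.2 (by rw [tropInf_zero, hmin]) ?_
    by_cases hB : x.2.2 = 2 * x.2.2 - x.1 + x.2.1
    · left
      refine ⟨hB, -1, ?_⟩
      rw [hg]; funext j; fin_cases j <;> simp <;> linarith
    · right
      refine ⟨hB, -1, ?_⟩
      rw [hg]; funext j; fin_cases j <;> simp <;> linarith
  · have hgx : gvec x = ![x.1, x.2.1] := by unfold gvec; rw [if_neg hA]
    have hg : Matrix.toLin' (refM 0) (gvec x) = ![-x.1 + 2 * x.2.1, x.2.1] := by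
      rw [hgx, refM0_pair]
    rcases hd with h | h | h
    · exact absurd h hA
    · rcases le_total (2 * x.2.1) (2 * x.2.2) with hm | hm
      · refine Gmap_eq' hx' _ (2 * x.2.1 - x.1) x.2.1 x.2.2
          (by rw [tropInf_zero, min_eq_left hm]) ?_
        by_cases hB : x.2.2 = 2 * x.2.1 - x.1 + x.2.1
        · left
          refine ⟨hB, -1, ?_⟩
          rw [hg]; funext j; fin_cases j <;> simp <;> linarith
        · right
          refine ⟨hB, 1, ?_⟩
          rw [hg]; funext j; fin_cases j <;> simp <;> linarith
      · refine Gmap_eq' hx' _ (2 * x.2.2 - x.1) x.2.1 x.2.2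
          (by rw [tropInf_zero, min_eq_right hm]) ?_
        left
        refine ⟨by linarith, -1, ?_⟩
        rw [hg]; funext j; fin_cases j <;> simp <;> linarith
    · have hm : 2 * x.2.1 ≤ 2 * x.2.2 := by linarith
      refine Gmap_eq' hx' _ (2 * x.2.1 - x.1) x.2.1 x.2.2
        (by rw [tropInf_zero, min_eq_left hm]) ?_
      by_cases hB : x.2.2 = 2 * x.2.1 - x.1 + x.2.1
      · left
        refine ⟨hB, 1, ?_⟩
        rw [hg]; funext j; fin_cases j <;> simp <;> linarith
      · right
        refine ⟨hB, 1, ?_⟩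
        rw [hg]; funext j; fin_cases j <;> simp <;> linarith

lemma Gequiv1 {x : R3} (hxs : x ∈ SkInfStar) (hx' : tropInf 1 x ∈ SkInfStar) :
    Gmap ⟨tropInf 1 x, hx'⟩ =
      Projectivization.mk ℝ (Matrix.toLin' (refM 1) (gvec x)) (toLin_gvec_ne 1 hxs) := by
  obtain ⟨⟨s1, s2, s3⟩, hd⟩ := (mem_skinf_iff x).1 hxs.1
  by_cases hA : x.2.2 = x.1 + x.2.1
  · have hgx : gvec x = ![x.1, -x.2.1] := by unfold gvec; rw [if_pos hA]
    have hg : Matrix.toLin' (refM 1) (gvec x) = ![x.1, 2 * x.1 + x.2.1] := by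
      rw [hgx, refM1_pair]; funext j; fin_cases j <;> simp <;> ring
    have hmin : min (2 * x.1) (2 * x.2.2) = 2 * x.2.2 := min_eq_right (by linarith)
    refine Gmap_eq' hx' _ x.1 (2 * x.2.2 - x.2.1) x.2.2 (by rw [tropInf_one, hmin]) ?_
    by_cases hB : x.2.2 = x.1 + (2 * x.2.2 - x.2.1)
    · left
      refine ⟨hB, -1, ?_⟩
      rw [hg]; funext j; fin_cases j <;> simp <;> linarith
    · right
      refine ⟨hB, 1, ?_⟩
      rw [hg]; funext j; fin_cases j <;> simp <;> linarith
  · have hgx : gvec x = ![x.1, x.2.1] := by unfold gvec; rw [if_neg hA]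
    have hg : Matrix.toLin' (refM 1) (gvec x) = ![x.1, 2 * x.1 - x.2.1] := by
      rw [hgx, refM1_pair]
    rcases hd with h | h | h
    · exact absurd h hA
    · have hmin : min (2 * x.1) (2 * x.2.2) = 2 * x.1 := min_eq_left (by linarith)
      refine Gmap_eq' hx' _ x.1 (2 * x.1 - x.2.1) x.2.2 (by rw [tropInf_one, hmin]) ?_
      by_cases hB : x.2.2 = x.1 + (2 * x.1 - x.2.1)
      · left
        refine ⟨hB, -1, ?_⟩
        rw [hg]; funext j; fin_cases j <;> simp <;> linarith
      · right
        refine ⟨hB, 1, ?_⟩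
        rw [hg]; funext j; fin_cases j <;> simp <;> linarith
    · rcases le_total (2 * x.1) (2 * x.2.2) with hm | hm
      · refine Gmap_eq' hx' _ x.1 (2 * x.1 - x.2.1) x.2.2
          (by rw [tropInf_one, min_eq_left hm]) ?_
        by_cases hB : x.2.2 = x.1 + (2 * x.1 - x.2.1)
        · left
          refine ⟨hB, 1, ?_⟩
          rw [hg]; funext j; fin_cases j <;> simp <;> linarith
        · right
          refine ⟨hB, 1, ?_⟩
          rw [hg]; funext j; fin_cases j <;> simp <;> linarith
      · refine Gmap_eq' hx' _ x.1 (2 * x.2.2 - x.2.1) x.2.2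
          (by rw [tropInf_one, min_eq_right hm]) ?_
        left
        refine ⟨by linarith, 1, ?_⟩
        rw [hg]; funext j; fin_cases j <;> simp <;> linarith

lemma Gequiv2 {x : R3} (hxs : x ∈ SkInfStar) (hx' : tropInf 2 x ∈ SkInfStar) :
    Gmap ⟨tropInf 2 x, hx'⟩ =
      Projectivization.mk ℝ (Matrix.toLin' (refM 2) (gvec x)) (toLin_gvec_ne 2 hxs) := by
  obtain ⟨⟨s1, s2, s3⟩, hd⟩ := (mem_skinf_iff x).1 hxs.1
  by_cases hA : x.2.2 = x.1 + x.2.1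
  · have hgx : gvec x = ![x.1, -x.2.1] := by unfold gvec; rw [if_pos hA]
    have hg : Matrix.toLin' (refM 2) (gvec x) = ![-x.1, -x.2.1] := by
      rw [hgx, refM2_pair]
    rcases le_total (2 * x.1) (2 * x.2.1) with hm | hm
    · refine Gmap_eq' hx' _ x.1 x.2.1 (2 * x.1 - x.2.2)
        (by rw [tropInf_two, min_eq_left hm]) ?_
      by_cases hB : 2 * x.1 - x.2.2 = x.1 + x.2.1
      · left
        refine ⟨hB, -1, ?_⟩
        rw [hg]; funext j; fin_cases j <;> simp <;> linarith
      · right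
        refine ⟨hB, -1, ?_⟩
        rw [hg]; funext j; fin_cases j <;> simp <;> linarith
    · refine Gmap_eq' hx' _ x.1 x.2.1 (2 * x.2.1 - x.2.2)
        (by rw [tropInf_two, min_eq_right hm]) ?_
      by_cases hB : 2 * x.2.1 - x.2.2 = x.1 + x.2.1
      · left
        refine ⟨hB, 1, ?_⟩
        rw [hg]; funext j; fin_cases j <;> simp <;> linarith
      · right
        refine ⟨hB, -1, ?_⟩
        rw [hg]; funext j; fin_cases j <;> simp <;> linarith
  · have hgx : gvec x = ![x.1, x.2.1] := by unfold gvec; rw [if_neg hA]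
    have hg : Matrix.toLin' (refM 2) (gvec x) = ![-x.1, x.2.1] := by
      rw [hgx, refM2_pair]
    rcases hd with h | h | h
    · exact absurd h hA
    · have hmin : min (2 * x.1) (2 * x.2.1) = 2 * x.1 := min_eq_left (by linarith)
      refine Gmap_eq' hx' _ x.1 x.2.1 (2 * x.1 - x.2.2) (by rw [tropInf_two, hmin]) ?_
      left
      refine ⟨by linarith, -1, ?_⟩
      rw [hg]; funext j; fin_cases j <;> simp <;> linarith
    · have hmin : min (2 * x.1) (2 * x.2.1) = 2 * x.2.1 := min_eq_right (by linarith)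
      refine Gmap_eq' hx' _ x.1 x.2.1 (2 * x.2.1 - x.2.2) (by rw [tropInf_two, hmin]) ?_
      left
      refine ⟨by linarith, -1, ?_⟩
      rw [hg]; funext j; fin_cases j <;> simp <;> linarith

lemma ne_zero_of_eqs {x : R3} (hxne : x ≠ 0) (h1 : x.1 = 0) (h2 : x.2.1 = 0)
    (h3 : x.2.2 = 0) : False :=
  hxne (Prod.ext h1 (Prod.ext h2 h3))

lemma tropInf_maps (i : Fin 3) : Set.MapsTo (tropInf i) SkInfStar SkInfStar := by
  intro x hx
  obtain ⟨⟨s1, s2, s3⟩, hd⟩ := (mem_skinf_iff x).1 hx.1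
  fin_cases i
  · -- i = 0
    show tropInf 0 x ∈ SkInfStar
    have hne : ∀ e : ℝ, (e, x.2.1, x.2.2) ≠ (0 : R3) := by
      intro e h0
      have e2 : x.2.1 = 0 := congrArg (Prod.fst ∘ Prod.snd) h0
      have e3 : x.2.2 = 0 := congrArg (Prod.snd ∘ Prod.snd) h0
      exact ne_zero_of_eqs hx.2 (by rcases hd with h | h | h <;> linarith) e2 e3
    rcases hd with h | h | h
    · have ht : tropInf 0 x = (2 * x.2.2 - x.1, x.2.1, x.2.2) := by
        rw [tropInf_zero, min_eq_right (by linarith)]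
      rw [ht]
      refine ⟨(mem_skinf_iff _).2 ⟨⟨by dsimp only; linarith, s2, s3⟩, ?_⟩, hne _⟩
      right; left; show x.2.2 = 2 * x.2.2 - x.1 - x.2.1; linarith
    · rcases le_total (2 * x.2.1) (2 * x.2.2) with hm | hm
      · have ht : tropInf 0 x = (2 * x.2.1 - x.1, x.2.1, x.2.2) := by
          rw [tropInf_zero, min_eq_left hm]
        rw [ht]
        refine ⟨(mem_skinf_iff _).2 ⟨⟨by dsimp only; linarith, s2, s3⟩, ?_⟩, hne _⟩
        right; right; show x.2.2 = x.2.1 - (2 * x.2.1 - x.1); linarith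
      · have ht : tropInf 0 x = (2 * x.2.2 - x.1, x.2.1, x.2.2) := by
          rw [tropInf_zero, min_eq_right hm]
        rw [ht]
        refine ⟨(mem_skinf_iff _).2 ⟨⟨by dsimp only; linarith, s2, s3⟩, ?_⟩, hne _⟩
        left; show x.2.2 = 2 * x.2.2 - x.1 + x.2.1; linarith
    · have ht : tropInf 0 x = (2 * x.2.1 - x.1, x.2.1, x.2.2) := by
        rw [tropInf_zero, min_eq_left (by linarith)]
      rw [ht]
      refine ⟨(mem_skinf_iff _).2 ⟨⟨by dsimp only; linarith, s2, s3⟩, ?_⟩, hne _⟩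
      right; left; show x.2.2 = 2 * x.2.1 - x.1 - x.2.1; linarith
  · -- i = 1
    show tropInf 1 x ∈ SkInfStar
    have hne : ∀ e : ℝ, (x.1, e, x.2.2) ≠ (0 : R3) := by
      intro e h0
      have e1 : x.1 = 0 := congrArg Prod.fst h0
      have e3 : x.2.2 = 0 := congrArg (Prod.snd ∘ Prod.snd) h0
      exact ne_zero_of_eqs hx.2 e1 (by rcases hd with h | h | h <;> linarith) e3
    rcases hd with h | h | h
    · have ht : tropInf 1 x = (x.1, 2 * x.2.2 - x.2.1, x.2.2) := by
        rw [tropInf_one, min_eq_right (by linarith)]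
      rw [ht]
      refine ⟨(mem_skinf_iff _).2 ⟨⟨s1, by dsimp only; linarith, s3⟩, ?_⟩, hne _⟩
      right; right; show x.2.2 = 2 * x.2.2 - x.2.1 - x.1; linarith
    · have ht : tropInf 1 x = (x.1, 2 * x.1 - x.2.1, x.2.2) := by
        rw [tropInf_one, min_eq_left (by linarith)]
      rw [ht]
      refine ⟨(mem_skinf_iff _).2 ⟨⟨s1, by dsimp only; linarith, s3⟩, ?_⟩, hne _⟩
      right; right; show x.2.2 = 2 * x.1 - x.2.1 - x.1; linarith
    · rcases le_total (2 * x.1) (2 * x.2.2) with hm | hm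
      · have ht : tropInf 1 x = (x.1, 2 * x.1 - x.2.1, x.2.2) := by
          rw [tropInf_one, min_eq_left hm]
        rw [ht]
        refine ⟨(mem_skinf_iff _).2 ⟨⟨s1, by dsimp only; linarith, s3⟩, ?_⟩, hne _⟩
        right; left; show x.2.2 = x.1 - (2 * x.1 - x.2.1); linarith
      · have ht : tropInf 1 x = (x.1, 2 * x.2.2 - x.2.1, x.2.2) := by
          rw [tropInf_one, min_eq_right hm]
        rw [ht]
        refine ⟨(mem_skinf_iff _).2 ⟨⟨s1, by dsimp only; linarith, s3⟩, ?_⟩, hne _⟩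
        left; show x.2.2 = x.1 + (2 * x.2.2 - x.2.1); linarith
  · -- i = 2
    show tropInf 2 x ∈ SkInfStar
    have hne : ∀ e : ℝ, (x.1, x.2.1, e) ≠ (0 : R3) := by
      intro e h0
      have e1 : x.1 = 0 := congrArg Prod.fst h0
      have e2 : x.2.1 = 0 := congrArg (Prod.fst ∘ Prod.snd) h0
      exact ne_zero_of_eqs hx.2 e1 e2 (by rcases hd with h | h | h <;> linarith)
    rcases hd with h | h | h
    · rcases le_total (2 * x.1) (2 * x.2.1) with hm | hm
      · have ht : tropInf 2 x = (x.1, x.2.1, 2 * x.1 - x.2.2) := by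
          rw [tropInf_two, min_eq_left hm]
        rw [ht]
        refine ⟨(mem_skinf_iff _).2 ⟨⟨s1, s2, by dsimp only; linarith⟩, ?_⟩, hne _⟩
        right; left; show 2 * x.1 - x.2.2 = x.1 - x.2.1; linarith
      · have ht : tropInf 2 x = (x.1, x.2.1, 2 * x.2.1 - x.2.2) := by
          rw [tropInf_two, min_eq_right hm]
        rw [ht]
        refine ⟨(mem_skinf_iff _).2 ⟨⟨s1, s2, by dsimp only; linarith⟩, ?_⟩, hne _⟩
        right; right; show 2 * x.2.1 - x.2.2 = x.2.1 - x.1; linarith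
    · have ht : tropInf 2 x = (x.1, x.2.1, 2 * x.1 - x.2.2) := by
        rw [tropInf_two, min_eq_left (by linarith)]
      rw [ht]
      refine ⟨(mem_skinf_iff _).2 ⟨⟨s1, s2, by dsimp only; linarith⟩, ?_⟩, hne _⟩
      left; show 2 * x.1 - x.2.2 = x.1 + x.2.1; linarith
    · have ht : tropInf 2 x = (x.1, x.2.1, 2 * x.2.1 - x.2.2) := by
        rw [tropInf_two, min_eq_right (by linarith)]
      rw [ht]
      refine ⟨(mem_skinf_iff _).2 ⟨⟨s1, s2, by dsimp only; linarith⟩, ?_⟩, hne _⟩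
      left; show 2 * x.2.1 - x.2.2 = x.1 + x.2.1; linarith

lemma tropInf_smul (i : Fin 3) (t : ℝ) (ht : 0 < t) (x : R3) :
    tropInf i (t • x) = t • tropInf i x := by
  have hsm : ∀ u v : ℝ, min (2 * (t * u)) (2 * (t * v)) = t * min (2 * u) (2 * v) := by
    intro u v
    rcases le_total u v with h | h
    · rw [min_eq_left (by nlinarith), min_eq_left (by linarith)]; ring
    · rw [min_eq_right (by nlinarith), min_eq_right (by linarith)]; ring
  fin_cases i
  · show tropInf 0 (t • x) = t • tropInf 0 x
    rw [tropInf_zero, tropInf_zero]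
    refine Prod.ext ?_ (Prod.ext ?_ ?_)
    · show min (2 * (t * x.2.1)) (2 * (t * x.2.2)) - t * x.1 =
        t * (min (2 * x.2.1) (2 * x.2.2) - x.1)
      rw [hsm]; ring
    · rfl
    · rfl
  · show tropInf 1 (t • x) = t • tropInf 1 x
    rw [tropInf_one, tropInf_one]
    refine Prod.ext ?_ (Prod.ext ?_ ?_)
    · rfl
    · show min (2 * (t * x.1)) (2 * (t * x.2.2)) - t * x.2.1 =
        t * (min (2 * x.1) (2 * x.2.2) - x.2.1)
      rw [hsm]; ring
    · rfl
  · show tropInf 2 (t • x) = t • tropInf 2 x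
    rw [tropInf_two, tropInf_two]
    refine Prod.ext ?_ (Prod.ext ?_ ?_)
    · rfl
    · rfl
    · show min (2 * (t * x.1)) (2 * (t * x.2.1)) - t * x.2.2 =
        t * (min (2 * x.1) (2 * x.2.1) - x.2.2)
      rw [hsm]; ring

lemma Gmap_smul {t : ℝ} (ht : 0 < t) {x : R3} (hx : x ∈ SkInfStar)
    (hx' : t • x ∈ SkInfStar) : Gmap ⟨t • x, hx'⟩ = Gmap ⟨x, hx⟩ := by
  apply (Projectivization.mk_eq_mk_iff' ℝ _ _ _ _).2
  refine ⟨t, ?_⟩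
  have hc : ((t • x : R3).2.2 = (t • x : R3).1 + (t • x : R3).2.1) ↔
      (x.2.2 = x.1 + x.2.1) := by
    show t * x.2.2 = t * x.1 + t * x.2.1 ↔ _
    constructor
    · intro h
      have h2 : t * x.2.2 = t * (x.1 + x.2.1) := by linarith
      exact mul_left_cancel₀ (ne_of_gt ht) h2
    · intro h; rw [h]; ring
  show t • gvec x = gvec (t • x)
  unfold gvec
  by_cases h : x.2.2 = x.1 + x.2.1
  · rw [if_pos h, if_pos (hc.2 h)]
    funext j
    fin_cases j <;> simp [Prod.smul_fst, Prod.smul_snd] <;> ring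
  · rw [if_neg h, if_neg (fun hh => h (hc.1 hh))]
    funext j
    fin_cases j <;> simp [Prod.smul_fst, Prod.smul_snd]

lemma abs_sub_key (w : Fin 2 → ℝ) :
    (-|w 0 - w 1| = -|w 0| + -|w 1|) ↔ w 0 * w 1 ≤ 0 := by
  constructor
  · intro h
    rcases abs_cases (w 0) with ⟨a0, b0⟩ | ⟨a0, b0⟩ <;>
      rcases abs_cases (w 1) with ⟨a1, b1⟩ | ⟨a1, b1⟩ <;>
      rcases abs_cases (w 0 - w 1) with ⟨a2, b2⟩ | ⟨a2, b2⟩ <;>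
      nlinarith
  · intro h
    rcases mul_nonpos_iff.1 h with ⟨h1, h2⟩ | ⟨h1, h2⟩
    · rw [abs_of_nonneg h1, abs_of_nonpos h2, abs_of_nonneg (by linarith)]; ring
    · rw [abs_of_nonpos h1, abs_of_nonneg h2, abs_of_nonpos (by linarith)]; ring

lemma Gmap_sbar {w : Fin 2 → ℝ} (hw : w ≠ 0) :
    Gmap ⟨sbar w, sbar_mem hw⟩ = Projectivization.mk ℝ w hw := by
  refine Gmap_eq' (sbar_mem hw) hw (-|w 0|) (-|w 1|) (-|w 0 - w 1|) rfl ?_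
  by_cases hB : -|w 0 - w 1| = -|w 0| + -|w 1|
  · left
    refine ⟨hB, ?_⟩
    rcases mul_nonpos_iff.1 ((abs_sub_key w).1 hB) with ⟨h1, h2⟩ | ⟨h1, h2⟩
    · refine ⟨-1, ?_⟩
      funext j
      fin_cases j <;> simp [abs_of_nonneg h1, abs_of_nonpos h2]
    · refine ⟨1, ?_⟩
      funext j
      fin_cases j <;> simp [abs_of_nonpos h1, abs_of_nonneg h2]
  · right
    refine ⟨hB, ?_⟩
    have hpos : 0 < w 0 * w 1 := by
      by_contra hc
      exact hB ((abs_sub_key w).2 (by linarith))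
    rcases mul_pos_iff.1 hpos with ⟨h1, h2⟩ | ⟨h1, h2⟩
    · refine ⟨-1, ?_⟩
      funext j
      fin_cases j <;> simp [abs_of_pos h1, abs_of_pos h2]
    · refine ⟨1, ?_⟩
      funext j
      fin_cases j <;> simp [abs_of_neg h1, abs_of_neg h2]

lemma Gmap_fiber (x y : SkInfStar) :
    Gmap x = Gmap y ↔ ∃ t : ℝ, 0 < t ∧ (y : R3) = t • (x : R3) := by
  constructor
  · intro h
    obtain ⟨a, ha⟩ := (Projectivization.mk_eq_mk_iff' ℝ _ _ _ _).1 h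
    have ha0 : a ≠ 0 := by
      rintro rfl
      rw [zero_smul] at ha
      exact gvec_ne_zero x.2 ha.symm
    have hx : (x : R3) = |a| • (y : R3) :=
      calc (x : R3) = sbar (gvec (x : R3)) := (rep_eq x.2).symm
        _ = sbar (a • gvec (y : R3)) := by rw [ha]
        _ = |a| • sbar (gvec (y : R3)) := sbar_smul a _
        _ = |a| • (y : R3) := by rw [rep_eq y.2]
    refine ⟨|a|⁻¹, inv_pos.2 (abs_pos.2 ha0), ?_⟩
    rw [hx, smul_smul, inv_mul_cancel₀ (abs_ne_zero.2 ha0), one_smul]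
  · rintro ⟨t, ht, hy⟩
    have h3 : y = ⟨t • (x : R3), by rw [← hy]; exact y.2⟩ := Subtype.ext hy
    rw [h3, Gmap_smul ht x.2]

lemma vnorm_pos {w : Fin 2 → ℝ} (hw : w ≠ 0) : 0 < |w 0| + |w 1| := by
  by_contra hc
  push_neg at hc
  apply hw
  have h0 : w 0 = 0 := abs_eq_zero.1
    (le_antisymm (by linarith [abs_nonneg (w 1)]) (abs_nonneg _))
  have h1 : w 1 = 0 := abs_eq_zero.1
    (le_antisymm (by linarith [abs_nonneg (w 0)]) (abs_nonneg _))
  funext i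
  fin_cases i <;> assumption

/-- A continuous section of `Gmap`, defined on representatives. -/
def sigma0 : {v : Fin 2 → ℝ // v ≠ 0} → SkInfStar := fun v =>
  ⟨(|v.1 0| + |v.1 1|)⁻¹ • sbar v.1,
    smul_mem_star (inv_pos.2 (vnorm_pos v.2)) (sbar_mem v.2)⟩

lemma sigma0_resp : ∀ u v : {v : Fin 2 → ℝ // v ≠ 0},
    (projectivizationSetoid ℝ (Fin 2 → ℝ)).r u v → sigma0 u = sigma0 v := by
  rintro ⟨u, hu⟩ ⟨v, hv⟩ h
  obtain ⟨a, ha⟩ := h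
  have hu0 : u = (a : ℝ) • v := ha.symm
  apply Subtype.ext
  show (|u 0| + |u 1|)⁻¹ • sbar u = (|v 0| + |v 1|)⁻¹ • sbar v
  subst hu0
  rw [sbar_smul]
  simp only [Pi.smul_apply, smul_eq_mul, abs_mul]
  rw [smul_smul]
  congr 1
  have hA : |(a : ℝ)| ≠ 0 := abs_ne_zero.2 (Units.ne_zero a)
  have heq : |(a : ℝ)| * |v 0| + |(a : ℝ)| * |v 1| = |(a : ℝ)| * (|v 0| + |v 1|) := by ring
  rw [heq, mul_inv, mul_comm (|(a : ℝ)|⁻¹), mul_assoc, inv_mul_cancel₀ hA, mul_one]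

/-- The induced section on the projective line. -/
def sigmaP : Projectivization ℝ (Fin 2 → ℝ) → SkInfStar := fun q =>
  Quotient.lift sigma0 sigma0_resp q

lemma Gmap_section (q : Projectivization ℝ (Fin 2 → ℝ)) : Gmap (sigmaP q) = q := by
  refine Projectivization.ind (fun v hv => ?_) q
  have h1 : sigmaP (Projectivization.mk ℝ v hv) = sigma0 ⟨v, hv⟩ := rfl
  rw [h1]
  have h2 : Gmap (sigma0 ⟨v, hv⟩) = Gmap ⟨sbar v, sbar_mem hv⟩ :=
    Gmap_smul (inv_pos.2 (vnorm_pos hv)) (sbar_mem hv) _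
  rw [h2, Gmap_sbar]

lemma vecA_ne (x : SkInfStar) : ![(x : R3).1, -(x : R3).2.1] ≠ (0 : Fin 2 → ℝ) := by
  intro h
  apply pair_ne x.2
  have h0 := congrFun h 0
  have h1 := congrFun h 1
  simp only [Matrix.cons_val_zero, Matrix.cons_val_one, Matrix.head_cons,
    Pi.zero_apply, neg_eq_zero] at h0 h1
  exact ⟨h0, h1⟩

lemma vecB_ne (x : SkInfStar) : ![(x : R3).1, (x : R3).2.1] ≠ (0 : Fin 2 → ℝ) := by
  intro h
  apply pair_ne x.2
  have h0 := congrFun h 0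
  have h1 := congrFun h 1
  simp only [Matrix.cons_val_zero, Matrix.cons_val_one, Matrix.head_cons,
    Pi.zero_apply] at h0 h1
  exact ⟨h0, h1⟩

lemma mk'_cont : Continuous
    (fun v : {v : Fin 2 → ℝ // v ≠ 0} => Projectivization.mk ℝ v.1 v.2) :=
  continuous_quot_mk

lemma Gmap_cont : Continuous Gmap := by
  have hc1 : Continuous fun x : SkInfStar => (x : R3).1 :=
    continuous_fst.comp continuous_subtype_val
  have hc2 : Continuous fun x : SkInfStar => (x : R3).2.1 :=
    continuous_fst.comp (continuous_snd.comp continuous_subtype_val)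
  have hc3 : Continuous fun x : SkInfStar => (x : R3).2.2 :=
    continuous_snd.comp (continuous_snd.comp continuous_subtype_val)
  have hinA : Continuous (fun x : SkInfStar =>
      (⟨![(x : R3).1, -(x : R3).2.1], vecA_ne x⟩ : {v : Fin 2 → ℝ // v ≠ 0})) := by
    apply Continuous.subtype_mk
    apply continuous_pi
    intro j
    fin_cases j
    · simpa using hc1
    · show Continuous fun x : SkInfStar => -(x : R3).2.1
      exact hc2.neg
  have hinB : Continuous (fun x : SkInfStar =>
      (⟨![(x : R3).1, (x : R3).2.1], vecB_ne x⟩ : {v : Fin 2 → ℝ // v ≠ 0})) := by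
    apply Continuous.subtype_mk
    apply continuous_pi
    intro j
    fin_cases j
    · simpa using hc1
    · simpa using hc2
  have hfA : Continuous fun x : SkInfStar =>
      Projectivization.mk ℝ ![(x : R3).1, -(x : R3).2.1] (vecA_ne x) :=
    mk'_cont.comp hinA
  have hfB : Continuous fun x : SkInfStar =>
      Projectivization.mk ℝ ![(x : R3).1, (x : R3).2.1] (vecB_ne x) :=
    mk'_cont.comp hinB
  have hGeq : Gmap = fun x : SkInfStar =>
      if (x : R3).2.2 = (x : R3).1 + (x : R3).2.1 then
        Projectivization.mk ℝ ![(x : R3).1, -(x : R3).2.1] (vecA_ne x)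
      else
        Projectivization.mk ℝ ![(x : R3).1, (x : R3).2.1] (vecB_ne x) := by
    funext x
    by_cases h : (x : R3).2.2 = (x : R3).1 + (x : R3).2.1
    · rw [if_pos h]
      apply mk_scalar _ _ 1
      rw [one_smul]
      unfold gvec
      rw [if_pos h]
    · rw [if_neg h]
      apply mk_scalar _ _ 1
      rw [one_smul]
      unfold gvec
      rw [if_neg h]
  rw [hGeq]
  refine Continuous.if ?_ hfA hfB
  intro x hx
  -- `x` is in the frontier of the branch set
  have hPc : IsClosed {y : SkInfStar | (y : R3).2.2 = (y : R3).1 + (y : R3).2.1} :=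
    isClosed_eq hc3 (hc1.add hc2)
  have h1 : (x : R3).2.2 = (x : R3).1 + (x : R3).2.1 := by
    have := frontier_subset_closure (s := {y : SkInfStar |
      (y : R3).2.2 = (y : R3).1 + (y : R3).2.1}) hx
    rwa [hPc.closure_eq] at this
  rw [frontier_eq_closure_inter_closure] at hx
  have h2 := hx.2
  have hsub : closure {y : SkInfStar |
        (y : R3).2.2 = (y : R3).1 + (y : R3).2.1}ᶜ ⊆
      {y : SkInfStar | (y : R3).2.2 = -|(y : R3).1 - (y : R3).2.1|} := by
    apply closure_minimal
    · intro y hy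
      obtain ⟨⟨t1, t2, t3⟩, hd⟩ := (mem_skinf_iff (y : R3)).1 y.2.1
      rcases hd with h' | h' | h'
      · exact absurd h' hy
      · show (y : R3).2.2 = -|(y : R3).1 - (y : R3).2.1|
        rw [abs_of_nonpos (by linarith)]; linarith
      · show (y : R3).2.2 = -|(y : R3).1 - (y : R3).2.1|
        rw [abs_of_nonneg (by linarith)]; linarith
    · exact isClosed_eq hc3 ((hc1.sub hc2).abs.neg)
  have h3 := hsub h2
  obtain ⟨⟨t1, t2, t3⟩, -⟩ := (mem_skinf_iff (x : R3)).1 x.2.1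
  have h4 : (x : R3).1 = 0 ∨ (x : R3).2.1 = 0 := by
    rcases abs_cases ((x : R3).1 - (x : R3).2.1) with ⟨e, f⟩ | ⟨e, f⟩
    · left
      have h5 : (x : R3).2.2 = -|(x : R3).1 - (x : R3).2.1| := h3
      rw [e] at h5; linarith
    · right
      have h5 : (x : R3).2.2 = -|(x : R3).1 - (x : R3).2.1| := h3
      rw [e] at h5; linarith
  rcases h4 with h4 | h4
  · apply mk_scalar _ _ (-1)
    funext j
    fin_cases j <;> simp [h4]
  · apply mk_scalar _ _ 1
    funext j
    fin_cases j <;> simp [h4]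

lemma Gmap_isQuotientMap : Topology.IsQuotientMap Gmap := by
  simp_rw [Topology.isQuotientMap_iff, Topology.isCoinducing_iff, and_comm, iff_comm]
  constructor
  · intro q
    exact ⟨sigmaP q, Gmap_section q⟩
  · intro s
    constructor
    · intro h
      exact h.preimage Gmap_cont
    · intro h
      have hs : s = sigmaP ⁻¹' (Gmap ⁻¹' s) := by
        ext q
        simp [Gmap_section q]
      rw [hs]
      have hsc : Continuous sigmaP := continuous_quot_lift _ (by
        apply Continuous.subtype_mk
        apply Continuous.fun_smul
        · apply Continuous.inv₀
          · exact (((continuous_apply 0).comp continuous_subtype_val).abs.add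
              ((continuous_apply 1).comp continuous_subtype_val).abs)
          · intro v; exact ne_of_gt (vnorm_pos v.2)
        · have hsbar : Continuous sbar := by
            unfold sbar
            exact ((continuous_apply 0).abs.neg).prodMk
              (((continuous_apply 1).abs.neg).prodMk
                (((continuous_apply 0).sub (continuous_apply 1)).abs.neg))
          exact hsbar.comp continuous_subtype_val)
      exact hsc.isOpen_preimage _ h

/-! #### Part 1: the skeleton is the degenerate skeleton when `min(a,b,c,d) ≥ 0` -/

lemma two_le_add (a : WithTop ℝ) (ha : 0 ≤ a) (p : ℝ) (hp : p ≤ 0) :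
    ((2 * p : ℝ) : WithTop ℝ) ≤ a + (p : WithTop ℝ) := by
  rw [show (2 * p : ℝ) = p + p by ring, WithTop.coe_add]
  apply add_le_add _ le_rfl
  calc (p : WithTop ℝ) ≤ ((0 : ℝ) : WithTop ℝ) := WithTop.coe_le_coe.2 hp
    _ = 0 := WithTop.coe_zero
    _ ≤ a := ha

lemma two_le_d (d : WithTop ℝ) (hd : 0 ≤ d) (p : ℝ) (hp : p ≤ 0) :
    ((2 * p : ℝ) : WithTop ℝ) ≤ d :=
  calc ((2 * p : ℝ) : WithTop ℝ) ≤ ((0 : ℝ) : WithTop ℝ) :=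
        WithTop.coe_le_coe.2 (by linarith)
    _ = 0 := WithTop.coe_zero
    _ ≤ d := hd

lemma tmin_eq {a b c d : WithTop ℝ} (ha : 0 ≤ a) (hb : 0 ≤ b) (hc : 0 ≤ c) (hd : 0 ≤ d)
    (x : R3) (h1 : x.1 ≤ 0) (h2 : x.2.1 ≤ 0) (h3 : x.2.2 ≤ 0) :
    tmin a b c d x = ((min (min (2 * x.1) (2 * x.2.1)) (2 * x.2.2) : ℝ) : WithTop ℝ) := by
  unfold tmin
  rw [WithTop.coe_min, WithTop.coe_min]
  have e1 : min (min ((2 * x.1 : ℝ) : WithTop ℝ) ((2 * x.2.1 : ℝ) : WithTop ℝ))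
      ((2 * x.2.2 : ℝ) : WithTop ℝ) ≤ ((2 * x.1 : ℝ) : WithTop ℝ) :=
    le_trans (min_le_left _ _) (min_le_left _ _)
  have e2 : min (min ((2 * x.1 : ℝ) : WithTop ℝ) ((2 * x.2.1 : ℝ) : WithTop ℝ))
      ((2 * x.2.2 : ℝ) : WithTop ℝ) ≤ ((2 * x.2.1 : ℝ) : WithTop ℝ) :=
    le_trans (min_le_left _ _) (min_le_right _ _)
  have e3 : min (min ((2 * x.1 : ℝ) : WithTop ℝ) ((2 * x.2.1 : ℝ) : WithTop ℝ))
      ((2 * x.2.2 : ℝ) : WithTop ℝ) ≤ ((2 * x.2.2 : ℝ) : WithTop ℝ) := min_le_right _ _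
  apply le_antisymm
  · refine le_min (le_min ?_ ?_) ?_
    · exact le_trans (min_le_left _ _) (le_trans (min_le_left _ _) (min_le_left _ _))
    · exact le_trans (min_le_left _ _) (le_trans (min_le_left _ _) (min_le_right _ _))
    · exact le_trans (min_le_left _ _) (le_trans (min_le_right _ _) (min_le_left _ _))
  · exact le_min (le_min (le_min e1 e2) (le_min e3 (le_trans e1 (two_le_add a ha x.1 h1))))
      (le_min (le_min (le_trans e2 (two_le_add b hb _ h2))
        (le_trans e3 (two_le_add c hc _ h3))) (le_trans e1 (two_le_d d hd _ h1)))

lemma sk_eq_skinf {a b c d : WithTop ℝ} (ha : 0 ≤ a) (hb : 0 ≤ b) (hc : 0 ≤ c)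
    (hd : 0 ≤ d) : Sk a b c d = SkInf := by
  apply Set.Subset.antisymm
  · intro x hx
    have hle1 : tmin a b c d x ≤ ((2 * x.1 : ℝ) : WithTop ℝ) :=
      le_trans (min_le_left _ _) (le_trans (min_le_left _ _) (min_le_left _ _))
    have hle2 : tmin a b c d x ≤ ((2 * x.2.1 : ℝ) : WithTop ℝ) :=
      le_trans (min_le_left _ _) (le_trans (min_le_left _ _) (min_le_right _ _))
    have hle3 : tmin a b c d x ≤ ((2 * x.2.2 : ℝ) : WithTop ℝ) :=
      le_trans (min_le_left _ _) (le_trans (min_le_right _ _) (min_le_left _ _))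
    have hne : tmin a b c d x ≠ ⊤ := ne_top_of_le_ne_top (WithTop.coe_ne_top) hle1
    obtain ⟨m, hm⟩ := WithTop.ne_top_iff_exists.1 hne
    have hf : m = x.1 + x.2.1 + x.2.2 := by
      have hx' := hx
      simp only [Sk, Set.mem_setOf_eq, f0] at hx'
      rw [← hm, WithTop.untopD_coe] at hx'
      linarith
    have hr1 : m ≤ 2 * x.1 := WithTop.coe_le_coe.1 (hm ▸ hle1)
    have hr2 : m ≤ 2 * x.2.1 := WithTop.coe_le_coe.1 (hm ▸ hle2)
    have hr3 : m ≤ 2 * x.2.2 := WithTop.coe_le_coe.1 (hm ▸ hle3)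
    show min (min (2 * x.1) (2 * x.2.1)) (2 * x.2.2) = x.1 + x.2.1 + x.2.2
    apply le_antisymm ?_ (le_min (le_min (by linarith) (by linarith)) (by linarith))
    by_contra hlt
    push_neg at hlt
    have l1 : x.1 + x.2.1 + x.2.2 < 2 * x.1 :=
      lt_of_lt_of_le hlt (le_trans (min_le_left _ _) (min_le_left _ _))
    have l2 : x.1 + x.2.1 + x.2.2 < 2 * x.2.1 :=
      lt_of_lt_of_le hlt (le_trans (min_le_left _ _) (min_le_right _ _))
    have l3 : x.1 + x.2.1 + x.2.2 < 2 * x.2.2 := lt_of_lt_of_le hlt (min_le_right _ _)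
    have hmem : ∀ u v : WithTop ℝ, (m : WithTop ℝ) = min u v →
        ((m : WithTop ℝ) = u ∨ (m : WithTop ℝ) = v) := by
      intro u v h
      rcases min_cases u v with ⟨e, -⟩ | ⟨e, -⟩
      · left; rw [h, e]
      · right; rw [h, e]
    unfold tmin at hm
    rcases hmem _ _ hm with h7 | h7
    · rcases hmem _ _ h7 with h8 | h8
      · rcases hmem _ _ h8 with h9 | h9
        · have := WithTop.coe_eq_coe.1 h9; linarith
        · have := WithTop.coe_eq_coe.1 h9; linarith
      · rcases hmem _ _ h8 with h9 | h9
        · have := WithTop.coe_eq_coe.1 h9; linarith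
        · have hatop : a ≠ ⊤ := by
            intro h
            rw [h, top_add] at h9
            exact WithTop.coe_ne_top h9
          lift a to ℝ using hatop with a'
          rw [← WithTop.coe_add] at h9
          have hma : m = a' + x.1 := WithTop.coe_eq_coe.1 h9
          have ha' : (0 : ℝ) ≤ a' := by exact_mod_cast ha
          linarith
    · rcases hmem _ _ h7 with h8 | h8
      · rcases hmem _ _ h8 with h9 | h9
        · have hbtop : b ≠ ⊤ := by
            intro h
            rw [h, top_add] at h9
            exact WithTop.coe_ne_top h9
          lift b to ℝ using hbtop with b'
          rw [← WithTop.coe_add] at h9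
          have hmb : m = b' + x.2.1 := WithTop.coe_eq_coe.1 h9
          have hb' : (0 : ℝ) ≤ b' := by exact_mod_cast hb
          linarith
        · have hctop : c ≠ ⊤ := by
            intro h
            rw [h, top_add] at h9
            exact WithTop.coe_ne_top h9
          lift c to ℝ using hctop with c'
          rw [← WithTop.coe_add] at h9
          have hmc : m = c' + x.2.2 := WithTop.coe_eq_coe.1 h9
          have hc' : (0 : ℝ) ≤ c' := by exact_mod_cast hc
          linarith
      · have hdtop : d ≠ ⊤ := fun h => WithTop.coe_ne_top (h ▸ h8)
        lift d to ℝ using hdtop with d'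
        have hmd : m = d' := WithTop.coe_eq_coe.1 h8
        have hd' : (0 : ℝ) ≤ d' := by exact_mod_cast hd
        linarith
  · intro x hx
    have hs := skinf_nonpos hx
    show f0 a b c d x = 0
    unfold f0
    rw [tmin_eq ha hb hc hd x hs.1 hs.2.1 hs.2.2, WithTop.untopD_coe]
    have he : min (min (2 * x.1) (2 * x.2.1)) (2 * x.2.2) = x.1 + x.2.1 + x.2.2 := hx
    rw [he]; ring

lemma min2_eq (b c d : WithTop ℝ) (hb : 0 ≤ b) (hc : 0 ≤ c) (hd : 0 ≤ d)
    (q r : ℝ) (hq : q ≤ 0) (hr : r ≤ 0) :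
    min (min ((2 * q : ℝ) : WithTop ℝ) ((2 * r : ℝ) : WithTop ℝ))
      (min (min (b + (q : WithTop ℝ)) (c + (r : WithTop ℝ))) d) =
      ((min (2 * q) (2 * r) : ℝ) : WithTop ℝ) := by
  rw [WithTop.coe_min]
  apply min_eq_left
  refine le_min (le_min ?_ ?_) ?_
  · exact le_trans (min_le_left _ _) (two_le_add b hb q hq)
  · exact le_trans (min_le_right _ _) (two_le_add c hc r hr)
  · exact le_trans (min_le_left _ _) (two_le_d d hd q hq)

lemma trop_eq_tropInf {a b c d : WithTop ℝ} (ha : 0 ≤ a) (hb : 0 ≤ b) (hc : 0 ≤ c)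
    (hd : 0 ≤ d) (i : Fin 3) (x : R3) (hx : x ∈ SkInf) :
    trop a b c d i x = tropInf i x := by
  obtain ⟨h1, h2, h3⟩ := skinf_nonpos hx
  fin_cases i
  · show trop a b c d 0 x = tropInf 0 x
    rw [trop_zero, tropInf_zero]
    unfold trop1
    rw [min2_eq b c d hb hc hd x.2.1 x.2.2 h2 h3, WithTop.untopD_coe]
  · show trop a b c d 1 x = tropInf 1 x
    rw [trop_one, tropInf_one]
    unfold trop2
    rw [min2_eq a c d ha hc hd x.1 x.2.2 h1 h3, WithTop.untopD_coe]
  · show trop a b c d 2 x = tropInf 2 x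
    rw [trop_two, tropInf_two]
    unfold trop3
    rw [min2_eq a b d ha hb hd x.1 x.2.1 h1 h2, WithTop.untopD_coe]

end Aux

theorem statement17 (a b c d : WithTop ℝ)
    (hhol : (0 : WithTop ℝ) ≤ min (min a b) (min c d)) :
    -- (1) `Sk(a,b,c,d)` is equivariantly homeomorphic to `Sk(∞,∞,∞,∞)`
    (∃ h hinv : R3 → R3,
      Set.BijOn h (Sk a b c d) SkInf ∧
      ContinuousOn h (Sk a b c d) ∧ ContinuousOn hinv SkInf ∧
      (∀ x ∈ Sk a b c d, hinv (h x) = x) ∧ (∀ y ∈ SkInf, h (hinv y) = y) ∧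
      (∀ i : Fin 3, ∀ x ∈ Sk a b c d, h (trop a b c d i x) = tropInf i (h x))) ∧
    -- (2) the maps `trop(sᵢ)^∞` commute with scaling, preserve `Sk∞ ∖ {0}`, and the
    -- induced maps on the quotient `S = (Sk∞ ∖ {0})/ℝ_{>0}` are conjugate, via a
    -- homeomorphism `S ≅ ℙ¹(ℝ)` (encoded by a quotient map `G` whose fibers are
    -- exactly the scaling orbits), to the projective actions of `M₁, M₂, M₃`
    ((∀ (i : Fin 3) (t : ℝ), 0 < t → ∀ x : R3, tropInf i (t • x) = t • tropInf i x) ∧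
      (∀ i : Fin 3, Set.MapsTo (tropInf i) SkInfStar SkInfStar) ∧
      ∃ G : SkInfStar → Projectivization ℝ (Fin 2 → ℝ),
        Topology.IsQuotientMap G ∧
        (∀ x y : SkInfStar, G x = G y ↔ ∃ t : ℝ, 0 < t ∧ (y : R3) = t • (x : R3)) ∧
        (∀ (i : Fin 3) (x : SkInfStar) (hx : tropInf i (x : R3) ∈ SkInfStar),
          G ⟨tropInf i (x : R3), hx⟩ =
            Projectivization.map (Matrix.toLin' (refM i)) (refM_toLin'_injective i) (G x))) := by
  have ha : (0 : WithTop ℝ) ≤ a :=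
    le_trans hhol (le_trans (min_le_left _ _) (min_le_left _ _))
  have hb : (0 : WithTop ℝ) ≤ b :=
    le_trans hhol (le_trans (min_le_left _ _) (min_le_right _ _))
  have hc : (0 : WithTop ℝ) ≤ c :=
    le_trans hhol (le_trans (min_le_right _ _) (min_le_left _ _))
  have hd : (0 : WithTop ℝ) ≤ d :=
    le_trans hhol (le_trans (min_le_right _ _) (min_le_right _ _))
  have hset : Sk a b c d = SkInf := sk_eq_skinf ha hb hc hd
  constructor
  · refine ⟨id, id, ?_, continuousOn_id, continuousOn_id, fun x _ => rfl, fun y _ => rfl, ?_⟩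
    · rw [hset]; exact Set.bijOn_id _
    · intro i x hx
      rw [hset] at hx
      simp only [id_eq]
      exact trop_eq_tropInf ha hb hc hd i x hx
  · refine ⟨tropInf_smul, tropInf_maps, Gmap, Gmap_isQuotientMap, Gmap_fiber, ?_⟩
    intro i x hx
    have hrhs : Projectivization.map (Matrix.toLin' (refM i)) (refM_toLin'_injective i)
        (Gmap x) =
        Projectivization.mk ℝ (Matrix.toLin' (refM i) (gvec (x : R3)))
          (toLin_gvec_ne i x.2) := by
      conv_lhs => rw [show Gmap x = Projectivization.mk ℝ (gvec (x : R3))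
        (gvec_ne_zero x.2) from rfl]
      rw [Projectivization.map_mk]
    rw [hrhs]
    fin_cases i
    · exact Gequiv0 x.2 hx
    · exact Gequiv1 x.2 hx
    · exact Gequiv2 x.2 hx
end
end
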